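/- Let λ ≥ μ ≥ 0 be real numbers. Then for all t ≥ 0: ∫₀^t (1+t−s)^{−λ}(1+s)^{−μ} ds ≤ C_{λ,μ}(t)·(1+t)^{−ρ}, where ρ = min{λ+μ−1, μ}, and where C_{λ,μ}(t) = C for a constant C depending only on λ and μ if λ ≠ 1, while C_{λ,μ}(t) = C·log(2+t) if λ = 1. -/

import Mathlib

/-!
Put `a = 1 + s` and `b = 1 + t - s`. The larger of `a`, `b` is at least `(a + b) / 2`, and because
`μ ≤ λ` the exponent `-λ` can be moved onto the smaller of them, giving
`b ^ (-λ) * a ^ (-μ) ≤ 2 ^ λ * (a + b) ^ (-μ) * (a ^ (-λ) + b ^ (-λ))`. Integrating reduces the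
estimate to `(1 + t) ^ (-μ) * ∫₀ᵗ (1 + s) ^ (-λ) ds`, an explicit integral which is of order
`(1 + t) ^ (1 - λ)` for `λ < 1`, equals `log (1 + t)` for `λ = 1` and is bounded for `λ > 1`.
-/

open MeasureTheory Real Set

theorem rpow_neg_le_two_rpow_mul_rpow_neg {x y α : ℝ} (hy : 0 < y) (hyx : y ≤ 2 * x)
    (hα : 0 ≤ α) : x ^ (-α) ≤ 2 ^ α * y ^ (-α) := by
  calc x ^ (-α) ≤ (y / 2) ^ (-α) :=
        rpow_le_rpow_of_nonpos (by positivity) (by linarith) (by linarith)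
    _ = 2 ^ α * y ^ (-α) := by
        rw [div_rpow hy.le zero_le_two, rpow_neg zero_le_two, div_inv_eq_mul, mul_comm]

theorem rpow_neg_mul_rpow_neg_le {a b α β : ℝ} (ha : 0 < a) (hb : 0 < b) (hβ : 0 ≤ β)
    (hβα : β ≤ α) : b ^ (-α) * a ^ (-β) ≤ 2 ^ α * (a + b) ^ (-β) * (a ^ (-α) + b ^ (-α)) := by
  rcases le_total a b with hab | hba
  · have hb' : b ^ (-α) ≤ 2 ^ α * (a + b) ^ (-α) :=
      rpow_neg_le_two_rpow_mul_rpow_neg (by positivity) (by linarith) (hβ.trans hβα)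
    have hswap : (a + b) ^ (-α) * a ^ (-β) ≤ (a + b) ^ (-β) * a ^ (-α) :=
      calc (a + b) ^ (-α) * a ^ (-β) = (a + b) ^ (-α) * a ^ (-α) * a ^ (α - β) := by
            rw [mul_assoc, ← rpow_add ha]; ring_nf
        _ ≤ (a + b) ^ (-α) * a ^ (-α) * (a + b) ^ (α - β) := by
            gcongr; linarith
        _ = (a + b) ^ (-β) * a ^ (-α) := by
            rw [mul_right_comm, ← rpow_add (by positivity)]; ring_nf
    calc b ^ (-α) * a ^ (-β) ≤ 2 ^ α * (a + b) ^ (-α) * a ^ (-β) := by gcongr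
      _ ≤ 2 ^ α * ((a + b) ^ (-β) * a ^ (-α)) := by rw [mul_assoc]; gcongr
      _ ≤ _ := by rw [← mul_assoc]; gcongr; exact le_add_of_nonneg_right (by positivity)
  · have ha' : a ^ (-β) ≤ 2 ^ α * (a + b) ^ (-β) :=
      (rpow_neg_le_two_rpow_mul_rpow_neg (by positivity) (by linarith) hβ).trans
        (mul_le_mul_of_nonneg_right (rpow_le_rpow_of_exponent_le one_le_two hβα)
          (by positivity))
    calc b ^ (-α) * a ^ (-β) ≤ b ^ (-α) * (2 ^ α * (a + b) ^ (-β)) := by gcongr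
      _ ≤ _ := by rw [mul_comm]; gcongr; exact le_add_of_nonneg_left (by positivity)

theorem integral_rpow_neg_mul_rpow_neg_le {α β t : ℝ} (hβ : 0 ≤ β) (hβα : β ≤ α) (ht : 0 ≤ t) :
    ∫ s in Icc 0 t, (1 + t - s) ^ (-α) * (1 + s) ^ (-β) ≤
      2 ^ (α + 1) * (1 + t) ^ (-β) * ∫ s in (0:ℝ)..t, (1 + s) ^ (-α) := by
  have hcont_add (γ : ℝ) : ContinuousOn (fun s : ℝ => (1 + s) ^ γ) (uIcc 0 t) :=
    ContinuousOn.rpow_const (by fun_prop) fun s hs => Or.inl (by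
      rw [uIcc_of_le ht] at hs; linarith [hs.1])
  have hcont_sub (γ : ℝ) : ContinuousOn (fun s : ℝ => (1 + t - s) ^ γ) (uIcc 0 t) :=
    ContinuousOn.rpow_const (by fun_prop) fun s hs => Or.inl (by
      rw [uIcc_of_le ht] at hs; linarith [hs.2])
  have hpointwise : ∀ s ∈ Icc 0 t, (1 + t - s) ^ (-α) * (1 + s) ^ (-β) ≤
      2 ^ α * (1 + t) ^ (-β) * ((1 + s) ^ (-α) + (1 + t - s) ^ (-α)) := by
    rintro s ⟨hs0, hst⟩
    refine (rpow_neg_mul_rpow_neg_le (by linarith) (by linarith) hβ hβα).trans ?_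
    have hsum : (1 + s + (1 + t - s)) ^ (-β) ≤ (1 + t) ^ (-β) :=
      rpow_le_rpow_of_nonpos (by linarith) (by linarith) (by linarith)
    gcongr
    exact add_nonneg (rpow_nonneg (by linarith) _) (rpow_nonneg (by linarith) _)
  have hreflect : ∫ s in (0:ℝ)..t, (1 + t - s) ^ (-α) = ∫ s in (0:ℝ)..t, (1 + s) ^ (-α) := by
    simpa [add_sub_assoc] using
      intervalIntegral.integral_comp_sub_left (a := 0) (b := t) (fun s => (1 + s) ^ (-α)) t
  rw [integral_Icc_eq_integral_Ioc, ← intervalIntegral.integral_of_le ht]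
  calc _ ≤ ∫ s in (0:ℝ)..t, 2 ^ α * (1 + t) ^ (-β) * ((1 + s) ^ (-α) + (1 + t - s) ^ (-α)) :=
        intervalIntegral.integral_mono_on ht ((hcont_sub _).mul (hcont_add _)).intervalIntegrable
          (continuousOn_const.mul ((hcont_add _).add (hcont_sub _))).intervalIntegrable hpointwise
    _ = 2 ^ (α + 1) * (1 + t) ^ (-β) * ∫ s in (0:ℝ)..t, (1 + s) ^ (-α) := by
        rw [intervalIntegral.integral_const_mul, intervalIntegral.integral_add
          (hcont_add _).intervalIntegrable (hcont_sub _).intervalIntegrable, hreflect,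
          rpow_add_one two_ne_zero]
        ring

theorem integral_one_add_rpow_neg {α t : ℝ} (hα : α ≠ 1) (ht : -1 < t) :
    ∫ s in (0:ℝ)..t, (1 + s) ^ (-α) = ((1 + t) ^ (1 - α) - 1) / (1 - α) := by
  rw [intervalIntegral.integral_comp_add_left (· ^ (-α)), integral_rpow]
  · simp [sub_eq_neg_add]
  · refine Or.inr ⟨by contrapose! hα; linarith, ?_⟩
    rw [mem_uIcc]; rintro (h | h) <;> linarith [h.1, h.2]

theorem integral_one_add_rpow_neg_one {t : ℝ} (ht : -1 < t) :
    ∫ s in (0:ℝ)..t, (1 + s) ^ (-1 : ℝ) = log (1 + t) := by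
  simp_rw [rpow_neg_one]
  rw [intervalIntegral.integral_comp_add_left (·⁻¹), integral_inv]
  · simp
  · rw [mem_uIcc]; rintro (h | h) <;> linarith [h.1, h.2]

theorem integral_one_add_rpow_neg_le {α t : ℝ} (hα : α ≠ 1) (ht : 0 ≤ t) :
    ∫ s in (0:ℝ)..t, (1 + s) ^ (-α) ≤ |1 - α|⁻¹ * (1 + t) ^ max (1 - α) 0 := by
  rw [integral_one_add_rpow_neg hα (by linarith)]
  rcases lt_or_gt_of_ne hα with hlt | hgt
  · rw [abs_of_pos (sub_pos.2 hlt), max_eq_left (sub_nonneg.2 hlt.le), inv_mul_eq_div]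
    gcongr
    linarith
  · rw [abs_of_neg (sub_neg.2 hgt), max_eq_right (by linarith), rpow_zero, mul_one,
      ← neg_div_neg_eq, neg_sub, neg_sub, inv_eq_one_div]
    have hp : 0 ≤ (1 + t) ^ (1 - α) := by positivity
    gcongr
    linarith

/-- **Basic decay estimate** (Proposition `BasicDecay`):
`∫₀^t (1+t−s)^{−λ}(1+s)^{−μ} ds ≤ C_{λ,μ}(t) (1+t)^{−ρ}` with
`ρ = min{λ+μ−1, μ}` and `C_{λ,μ}(t) = C` if `λ ≠ 1`, `C log(2+t)` if `λ = 1`. -/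
theorem basic_decay (lam mu : ℝ) (hmu : 0 ≤ mu) (hlm : mu ≤ lam) :
    ∃ C : ℝ, 0 < C ∧ ∀ t : ℝ, 0 ≤ t →
      (∫ s in Set.Icc (0:ℝ) t, (1 + t - s) ^ (-lam) * (1 + s) ^ (-mu)) ≤
        (if lam = 1 then C * Real.log (2 + t) else C) * (1 + t) ^ (-min (lam + mu - 1) mu) := by
  by_cases hl1 : lam = 1
  · subst hl1
    refine ⟨2 ^ ((1:ℝ) + 1), by positivity, fun t ht => ?_⟩
    rw [if_pos rfl, add_sub_cancel_left, min_self]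
    calc _ ≤ 2 ^ ((1:ℝ) + 1) * (1 + t) ^ (-mu) * ∫ s in (0:ℝ)..t, (1 + s) ^ (-1 : ℝ) :=
          integral_rpow_neg_mul_rpow_neg_le hmu hlm ht
      _ = 2 ^ ((1:ℝ) + 1) * log (1 + t) * (1 + t) ^ (-mu) := by
          rw [integral_one_add_rpow_neg_one (t := t) (by linarith)]; ring
      _ ≤ 2 ^ ((1:ℝ) + 1) * log (2 + t) * (1 + t) ^ (-mu) := by
          gcongr
          norm_num
  · have hC : 0 < |1 - lam|⁻¹ := inv_pos.2 (abs_pos.2 (sub_ne_zero.2 (Ne.symm hl1)))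
    refine ⟨2 ^ (lam + 1) * |1 - lam|⁻¹, mul_pos (by positivity) hC, fun t ht => ?_⟩
    have hexp : -mu + max (1 - lam) 0 = -min (lam + mu - 1) mu := by
      rw [← max_neg_neg, ← max_add_add_left]; congr 1 <;> ring
    rw [if_neg hl1, ← hexp, rpow_add (x := 1 + t) (by linarith)]
    calc _ ≤ 2 ^ (lam + 1) * (1 + t) ^ (-mu) * ∫ s in (0:ℝ)..t, (1 + s) ^ (-lam) :=
          integral_rpow_neg_mul_rpow_neg_le hmu hlm ht
      _ ≤ 2 ^ (lam + 1) * (1 + t) ^ (-mu) * (|1 - lam|⁻¹ * (1 + t) ^ max (1 - lam) 0) := by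
          gcongr
          exact integral_one_add_rpow_neg_le hl1 ht
      _ = _ := by ring
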